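/- Let n > m ≥ 1 and let 𝐙, 𝐘 : [0,T] → T_1^{(n)}(ℝ^d) be two càdlàg paths of finite p-variation (w.r.t. the homogeneous norm ‖1+g‖ := ∑_{k=1}^n |g^k|^{1/k}), both starting at 1, both projecting to the same path 𝐗^{(m)} in T^{(m)}, with n = m+1, and having identical jumps: Δ_t 𝐙 = Δ_t 𝐘 for all t. Then 𝐙 = 𝐘. -/

import Mathlib

open scoped BigOperators
open MeasureTheory

noncomputable section

/-- Truncated (at level `N`) tensor-algebra multiplication, in the model of
`T^{(N)}(ℝ^d)` as real-valued functions on words over the alphabet `Fin d`. -/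
noncomputable def taMul (N : ℕ) {d : ℕ} (x y : List (Fin d) → ℝ) : List (Fin d) → ℝ :=
  fun w => if w.length ≤ N then
    ∑ i ∈ Finset.range (w.length + 1), x (w.take i) * y (w.drop i) else 0

/-- The unit of the tensor algebra. -/
def taOne {d : ℕ} : List (Fin d) → ℝ := fun w => if w = [] then 1 else 0

/-- Powers in the truncated tensor algebra. -/
noncomputable def taPow (N : ℕ) {d : ℕ} (x : List (Fin d) → ℝ) : ℕ → (List (Fin d) → ℝ)
  | 0 => taOne
  | k + 1 => taMul N x (taPow N x k)

/-- Truncated tensor exponential `exp^{(N)}(x) = ∑_{k=0}^N x^{⊗k}/k!`. -/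
noncomputable def taExp (N : ℕ) {d : ℕ} (x : List (Fin d) → ℝ) : List (Fin d) → ℝ :=
  fun w => ∑ k ∈ Finset.range (N + 1), ((k.factorial : ℝ))⁻¹ * taPow N x k w

/-- Truncated tensor logarithm `log^{(N)}(x) = ∑_{k=1}^N (−1)^{k+1}/k (x−1)^{⊗k}`. -/
noncomputable def taLog (N : ℕ) {d : ℕ} (x : List (Fin d) → ℝ) : List (Fin d) → ℝ :=
  fun w => ∑ k ∈ Finset.Icc 1 N,
    ((-1 : ℝ)) ^ (k + 1) / k * taPow N (fun u => x u - taOne u) k w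

/-- Inverse in the group `T₁^{(N)}`: `(1+g)⁻¹ = ∑_k (−g)^{⊗k}`. -/
noncomputable def taInv (N : ℕ) {d : ℕ} (x : List (Fin d) → ℝ) : List (Fin d) → ℝ :=
  fun w => ∑ k ∈ Finset.range (N + 1), ((-1 : ℝ)) ^ k * taPow N (fun u => x u - taOne u) k w

/-- Embedding of `ℝ^d` as 1-tensors. -/
def taInj {d : ℕ} (v : Fin d → ℝ) : List (Fin d) → ℝ
  | [i] => v i
  | _ => 0

/-- Embedding of a matrix as a 2-tensor. -/
def ta2 {d : ℕ} (a : Fin d → Fin d → ℝ) : List (Fin d) → ℝ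
  | [i, j] => a i j
  | _ => 0

/-- Homogeneous norm `‖1+g‖ = ∑_{k=1}^N |g^k|^{1/k}` on the truncated tensor algebra,
equivalent to the Carnot–Carathéodory norm on group-like elements. -/
noncomputable def taHomNorm (N : ℕ) {d : ℕ} (x : List (Fin d) → ℝ) : ℝ :=
  ∑ k ∈ Finset.Icc 1 N, (∑ f : Fin k → Fin d, |x (List.ofFn f)|) ^ ((k : ℝ)⁻¹)

def IsPartition (a b : ℝ) (P : Finset ℝ) : Prop :=
  a ∈ P ∧ b ∈ P ∧ ∀ x ∈ P, x ∈ Set.Icc a b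

noncomputable def nextPt (P : Finset ℝ) (b x : ℝ) : ℝ :=
  WithBot.unbotD b (P.filter (fun y => x < y)).min

def Cadlag (X : ℝ → ℝ) (a b : ℝ) : Prop :=
  (∀ t ∈ Set.Ico a b, Filter.Tendsto X (nhdsWithin t (Set.Ici t)) (nhds (X t))) ∧
  (∀ t ∈ Set.Ioc a b, ∃ L : ℝ, Filter.Tendsto X (nhdsWithin t (Set.Iio t)) (nhds L))

/-- Componentwise left limit of a tensor-algebra valued path. -/
noncomputable def taLeftLim (Z : ℝ → List (Fin d) → ℝ) (t : ℝ) : List (Fin d) → ℝ :=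
  fun w => Function.leftLim (fun s => Z s w) t

/-! Fix a word `w` of length `m + 1` and let `D t = Z_t^w - Y_t^w`. Because `Z` and `Y` agree on
all lower levels, the level-`(m+1)` component of `Z_s⁻¹ ⊗ Z_t` minus that of `Y_s⁻¹ ⊗ Y_t` is
exactly `D t - D s`. Equal jumps therefore make `D` continuous, and since that component is bounded
by the `(m+1)`-th power of the homogeneous norm, `D` has finite `q`-variation for
`q = p / (m + 1) < 1`. A continuous path of finite `q`-variation with `q < 1` is constant:
`∑ |ΔD| ≤ (max |ΔD|) ^ (1 - q) * ∑ |ΔD| ^ q`, which tends to `0` along uniform partitions.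
Finally `D 0 = 0`. -/

section Partition

open Finset

variable {u : ℕ → ℝ} {K : ℕ}

theorem isPartition_image_range (hu : StrictMonoOn u (Set.Iic K)) :
    IsPartition (u 0) (u K) ((range (K + 1)).image u) := by
  refine ⟨mem_image_of_mem u (by simp), mem_image_of_mem u (by simp), ?_⟩
  simp only [mem_image, mem_range, forall_exists_index, and_imp]
  rintro _ j hj rfl
  exact ⟨hu.monotoneOn (by simp) (by simp; omega) (Nat.zero_le j),
    hu.monotoneOn (by simp; omega) (by simp) (by omega)⟩

theorem nextPt_image_range (hu : StrictMonoOn u (Set.Iic K)) {i : ℕ} (hi : i < K) :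
    nextPt ((range (K + 1)).image u) (u K) (u i) = u (i + 1) := by
  set Q := ((range (K + 1)).image u).filter (u i < ·)
  have hmem : u (i + 1) ∈ Q :=
    mem_filter.mpr ⟨mem_image_of_mem u (by simp; omega), hu (by simp; omega) (by simp; omega)
      (Nat.lt_succ_self i)⟩
  have hle : ∀ y ∈ Q, u (i + 1) ≤ y := by
    simp only [Q, mem_filter, mem_image, mem_range, and_imp, forall_exists_index]
    rintro _ j hj rfl hij
    have : i < j := (hu.lt_iff_lt (by simp; omega) (by simp; omega)).mp hij
    exact hu.monotoneOn (by simp; omega) (by simp; omega) this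
  rw [nextPt, ← coe_min' ⟨_, hmem⟩, le_antisymm (min'_le Q _ hmem) (le_min' Q _ _ hle)]
  rfl

theorem sum_nextPt_image_range (hu : StrictMonoOn u (Set.Iic K)) (F : ℝ → ℝ → ℝ) :
    ∑ x ∈ ((range (K + 1)).image u).erase (u K),
      F x (nextPt ((range (K + 1)).image u) (u K) x) = ∑ i ∈ range K, F (u i) (u (i + 1)) := by
  have hK : u K ∉ (range K).image u := by
    simp only [mem_image, mem_range, not_exists, not_and]
    exact fun j hj => (hu (by simp; omega) (by simp) hj).ne
  have hinj : Set.InjOn u (range K) := hu.injOn.mono fun j hj => by simp at hj ⊢; omega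
  have herase : ((range (K + 1)).image u).erase (u K) = (range K).image u := by
    rw [range_add_one, image_insert, erase_insert hK]
  rw [herase, sum_image hinj]
  exact sum_congr rfl fun i hi => by rw [nextPt_image_range hu (mem_range.mp hi)]

theorem sum_le_of_forall_isPartition {F : ℝ → ℝ → ℝ} {a b M : ℝ}
    (hF : ∀ s t, 0 ≤ F s t)
    (hM : ∀ P, IsPartition a b P → ∑ x ∈ P.erase b, F x (nextPt P b x) ≤ M)
    (hu : StrictMonoOn u (Set.Iic K)) (hu0 : u 0 = a) (huK : u K ≤ b) :
    ∑ i ∈ range K, F (u i) (u (i + 1)) ≤ M := by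
  subst hu0
  rcases huK.eq_or_lt with rfl | hlt
  · exact sum_nextPt_image_range hu F ▸ hM _ (isPartition_image_range hu)
  set v : ℕ → ℝ := fun i => if i ≤ K then u i else b
  have hv : StrictMonoOn v (Set.Iic (K + 1)) := by
    refine strictMonoOn_Iic_of_lt_succ fun i hi => ?_
    rcases (Nat.lt_succ_iff.mp hi).lt_or_eq with hi | rfl
    · have : u i < u (i + 1) := hu (by simp; omega) (by simp; omega) (Nat.lt_succ_self i)
      simpa [v, hi.le, hi] using this
    · simpa [v] using hlt
  calc ∑ i ∈ range K, F (u i) (u (i + 1))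
      ≤ ∑ i ∈ range (K + 1), F (v i) (v (i + 1)) := by
        have hvu : ∀ i ∈ range K, F (v i) (v (i + 1)) = F (u i) (u (i + 1)) := fun i hi => by
          have hi : i < K := mem_range.mp hi
          simp [v, hi.le, hi]
        rw [sum_range_succ, sum_congr rfl hvu]
        exact le_add_of_nonneg_right (hF _ _)
    _ ≤ M := by
        have hvK : v (K + 1) = b := by simp [v]
        have hP := isPartition_image_range hv
        rw [hvK] at hP
        have := hM _ hP
        rwa [← hvK, sum_nextPt_image_range hv] at this

end Partition

theorem continuousOn_Icc_of_continuousWithinAt_Ici_Iio {α β : Type*} [TopologicalSpace α]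
    [LinearOrder α] [TopologicalSpace β] {f : α → β} {a b : α}
    (hr : ∀ t ∈ Set.Ico a b, ContinuousWithinAt f (Set.Ici t) t)
    (hl : ∀ t ∈ Set.Ioc a b, ContinuousWithinAt f (Set.Iio t) t) :
    ContinuousOn f (Set.Icc a b) := by
  intro t ht
  rw [← Set.Icc_union_Icc_eq_Icc ht.1 ht.2]
  refine ContinuousWithinAt.union ?_ ?_
  · rcases ht.1.eq_or_lt with rfl | hat
    · rw [Set.Icc_self]; exact continuousWithinAt_singleton
    · exact (continuousWithinAt_Iio_iff_Iic.mp (hl t ⟨hat, ht.2⟩)).mono Set.Icc_subset_Iic_self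
  · rcases ht.2.eq_or_lt with rfl | htb
    · rw [Set.Icc_self]; exact continuousWithinAt_singleton
    · exact (hr t ⟨ht.1, htb⟩).mono Set.Icc_subset_Ici_self

theorem Finset.sum_le_rpow_mul_sum_rpow {ι : Type*} {s : Finset ι} {g : ι → ℝ} {ε q : ℝ}
    (hq : q ≤ 1) (hg : ∀ i ∈ s, 0 ≤ g i) (hgε : ∀ i ∈ s, g i ≤ ε) :
    ∑ i ∈ s, g i ≤ ε ^ (1 - q) * ∑ i ∈ s, g i ^ q := by
  rw [Finset.mul_sum]
  refine Finset.sum_le_sum fun i hi => ?_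
  calc g i = g i ^ (1 - q) * g i ^ q := by
        rw [← Real.rpow_add' (hg i hi) (by norm_num), sub_add_cancel, Real.rpow_one]
    _ ≤ ε ^ (1 - q) * g i ^ q :=
        mul_le_mul_of_nonneg_right (Real.rpow_le_rpow (hg i hi) (hgε i hi) (by linarith))
          (Real.rpow_nonneg (hg i hi) _)

theorem eq_of_continuousOn_of_sum_rpow_le {f : ℝ → ℝ} {a b q M : ℝ} (hab : a ≤ b)
    (hf : ContinuousOn f (Set.Icc a b)) (hq : q < 1)
    (hM : ∀ (K : ℕ) (u : ℕ → ℝ), StrictMonoOn u (Set.Iic K) → u 0 = a → u K = b →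
      ∑ i ∈ Finset.range K, |f (u (i + 1)) - f (u i)| ^ q ≤ M) :
    f a = f b := by
  rcases hab.eq_or_lt with rfl | hab
  · rfl
  have hbound : ∀ ε > 0, |f b - f a| ≤ ε ^ (1 - q) * M := by
    intro ε hε
    obtain ⟨δ, hδ, hfδ⟩ :=
      Metric.uniformContinuousOn_iff.mp (isCompact_Icc.uniformContinuousOn_of_continuous hf) ε hε
    obtain ⟨K, hK⟩ := exists_nat_gt ((b - a) / δ)
    have hK0 : (0 : ℝ) < K := lt_trans (by positivity) hK
    set h := (b - a) / K
    have hh : 0 < h := by positivity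
    have hhδ : h < δ := by rwa [div_lt_iff₀ hK0, mul_comm, ← div_lt_iff₀ hδ]
    set u : ℕ → ℝ := fun i => a + i * h
    have hu : StrictMono u := fun i j hij => by simp only [u]; gcongr
    have huK : u K = b := by simp only [u, h]; field_simp; ring
    have hmem : ∀ i ≤ K, u i ∈ Set.Icc a b := fun i hi =>
      ⟨le_add_of_nonneg_right (by positivity), huK ▸ hu.monotone hi⟩
    have hsmall : ∀ i ∈ Finset.range K, |f (u (i + 1)) - f (u i)| ≤ ε := fun i hi => by
      have hi := Finset.mem_range.mp hi
      refine (hfδ _ (hmem (i + 1) hi) _ (hmem i hi.le) ?_).le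
      simpa [u, Real.dist_eq, abs_of_pos hh, add_mul] using hhδ
    calc |f b - f a| = |∑ i ∈ Finset.range K, (f (u (i + 1)) - f (u i))| := by
          rw [Finset.sum_range_sub (fun i => f (u i)), huK]; simp [u]
      _ ≤ ∑ i ∈ Finset.range K, |f (u (i + 1)) - f (u i)| := Finset.abs_sum_le_sum_abs _ _
      _ ≤ ε ^ (1 - q) * ∑ i ∈ Finset.range K, |f (u (i + 1)) - f (u i)| ^ q :=
          Finset.sum_le_rpow_mul_sum_rpow hq.le (fun _ _ => abs_nonneg _) hsmall
      _ ≤ ε ^ (1 - q) * M := by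
          gcongr
          exact hM K u (hu.strictMonoOn _) (by simp [u]) huK
  have hlim : Filter.Tendsto (fun ε : ℝ => ε ^ (1 - q) * M) (nhds 0) (nhds 0) := by
    have := (Real.continuousAt_rpow_const 0 (1 - q) (Or.inr (by linarith))).tendsto.mul_const M
    rwa [Real.zero_rpow (by linarith), zero_mul] at this
  have := ge_of_tendsto (hlim.mono_left nhdsWithin_le_nhds)
    (eventually_nhdsWithin_of_forall (s := Set.Ioi 0) hbound)
  exact (sub_eq_zero.mp (abs_nonpos_iff.mp this)).symm

def AgreeUpTo {d : ℕ} (m : ℕ) (x y : List (Fin d) → ℝ) : Prop :=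
  ∀ u : List (Fin d), u.length ≤ m → x u = y u

namespace AgreeUpTo

variable {d m N : ℕ} {x x' y y' g g' : List (Fin d) → ℝ}

theorem mul (hx : AgreeUpTo m x x') (hy : AgreeUpTo m y y') :
    AgreeUpTo m (taMul N x y) (taMul N x' y') := by
  intro w hw
  simp only [_root_.taMul]
  refine if_congr Iff.rfl (Finset.sum_congr rfl fun i _ => ?_) rfl
  rw [hx _ (by simp; omega), hy _ (by simp; omega)]

theorem pow (hg : AgreeUpTo m g g') (k : ℕ) :
    AgreeUpTo m (taPow N g k) (taPow N g' k) := by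
  induction k with
  | zero => exact fun _ _ => rfl
  | succ k ih => exact hg.mul ih

theorem inv (hx : AgreeUpTo m x x') : AgreeUpTo m (taInv N x) (taInv N x') := by
  intro w hw
  have hg : AgreeUpTo m (fun u => x u - taOne u) (fun u => x' u - taOne u) :=
    fun u hu => by simp only [hx u hu]
  exact Finset.sum_congr rfl fun k _ => by rw [hg.pow k w hw]

theorem mul_succ (hx : x [] = 0) (hx' : x' [] = 0) (hy : y [] = 0) (hy' : y' [] = 0)
    (hxx : AgreeUpTo m x x') (hyy : AgreeUpTo m y y') :
    AgreeUpTo (m + 1) (taMul N x y) (taMul N x' y') := by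
  intro w hw
  rcases hw.lt_or_eq with hw | hw
  · exact hxx.mul hyy w (Nat.lt_succ_iff.mp hw)
  simp only [_root_.taMul]
  refine if_congr Iff.rfl (Finset.sum_congr rfl fun i hi => ?_) rfl
  rw [Finset.mem_range] at hi
  rcases Nat.eq_zero_or_pos i with rfl | hi0
  · simp [hx, hx']
  rcases (Nat.lt_succ_iff.mp hi).lt_or_eq with hi' | rfl
  · rw [hxx _ (by simp; omega), hyy _ (by simp; omega)]
  · simp [hy, hy']

end AgreeUpTo

section

variable {d : ℕ}

theorem taPow_succ_nil {N : ℕ} {g : List (Fin d) → ℝ} (hg : g [] = 0) (k : ℕ) :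
    taPow N g (k + 1) [] = 0 := by
  simp [taPow, taMul, hg]

theorem taPow_one_apply {N : ℕ} (g : List (Fin d) → ℝ) {w : List (Fin d)}
    (hw : w.length ≤ N) :
    taPow N g 1 w = g w := by
  simp only [taPow, taMul, if_pos hw]
  rw [Finset.sum_eq_single_of_mem w.length (by simp)]
  · simp [taOne]
  · intro i hi hne
    rw [Finset.mem_range] at hi
    simp [taOne, List.drop_eq_nil_iff]
    omega

theorem taInv_nil {N : ℕ} {x : List (Fin d) → ℝ} (hx : x [] = 1) : taInv N x [] = 1 := by
  rw [taInv, Finset.sum_eq_single_of_mem 0 (by simp)]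
  · simp [taPow, taOne]
  · rintro (_ | k) _ hk
    · exact absurd rfl hk
    · rw [taPow_succ_nil (by simp [hx, taOne]), mul_zero]

section TopLevel

variable {m N : ℕ} {x x' y y' : List (Fin d) → ℝ} {w : List (Fin d)}

theorem taInv_sub_taInv_of_length_eq (hx : x [] = 1) (hx' : x' [] = 1)
    (h : AgreeUpTo m x x') (hw : w.length = m + 1) (hN : m + 1 ≤ N) :
    taInv N x w - taInv N x' w = x' w - x w := by
  set g : List (Fin d) → ℝ := fun u => x u - taOne u
  set g' : List (Fin d) → ℝ := fun u => x' u - taOne u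
  have hg : AgreeUpTo m g g' := fun u hu => by simp only [g, g', h u hu]
  have hg0 : g [] = 0 := by simp [g, hx, taOne]
  have hg0' : g' [] = 0 := by simp [g', hx', taOne]
  rw [taInv, taInv, ← Finset.sum_sub_distrib,
    Finset.sum_eq_single_of_mem 1 (by simp; omega)]
  · rw [taPow_one_apply _ (by omega), taPow_one_apply _ (by omega)]
    ring
  · rintro (_ | _ | k) _ hk
    · simp only [taPow, sub_self]
    · exact absurd rfl hk
    · have hpow : taPow N g (k + 1 + 1) w = taPow N g' (k + 1 + 1) w :=
        AgreeUpTo.mul_succ hg0 hg0' (taPow_succ_nil hg0 k) (taPow_succ_nil hg0' k) hg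
          (hg.pow (k + 1)) w hw.le
      rw [hpow, sub_self]

theorem taMul_taInv_sub_taMul_taInv_of_length_eq (hx : x [] = 1) (hx' : x' [] = 1)
    (hy : y [] = 1) (hy' : y' [] = 1) (hxx : AgreeUpTo m x x') (hyy : AgreeUpTo m y y')
    (hw : w.length = m + 1) (hN : m + 1 ≤ N) :
    taMul N (taInv N x) y w - taMul N (taInv N x') y' w = (y w - x w) - (y' w - x' w) := by
  have hinv := taInv_sub_taInv_of_length_eq hx hx' hxx hw hN
  -- at a word of length `m + 1`, only the two end terms of the product see level `m + 1`
  have hmid : ∀ i ∈ Finset.range m, taInv N x (w.take (i + 1)) * y (w.drop (i + 1)) =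
      taInv N x' (w.take (i + 1)) * y' (w.drop (i + 1)) := fun i hi => by
    rw [Finset.mem_range] at hi
    rw [hxx.inv _ (by simp; omega), hyy _ (by simp; omega)]
  have hsplit (f : ℕ → ℝ) : ∑ i ∈ Finset.range (m + 1 + 1), f i =
      f 0 + ∑ i ∈ Finset.range m, f (i + 1) + f (m + 1) := by
    rw [Finset.sum_range_succ, Finset.sum_range_succ', add_comm _ (f 0)]
  simp only [taMul, if_pos (hw.trans_le hN)]
  rw [hw, hsplit, hsplit, Finset.sum_congr rfl hmid]
  simp only [List.take_zero, List.drop_zero, List.take_of_length_le hw.le,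
    List.drop_of_length_le hw.le, taInv_nil hx, taInv_nil hx', hy, hy']
  linarith

theorem sub_eq_sub_of_taMul_taInv_eq (hx : x [] = 1) (hx' : x' [] = 1)
    (hy : y [] = 1) (hy' : y' [] = 1) (hxx : AgreeUpTo m x x') (hyy : AgreeUpTo m y y')
    (h : taMul N (taInv N x) y = taMul N (taInv N x') y')
    (hw : w.length = m + 1) (hN : m + 1 ≤ N) :
    y w - x w = y' w - x' w := by
  have := taMul_taInv_sub_taMul_taInv_of_length_eq hx hx' hy hy' hxx hyy hw hN
  rw [h, sub_self] at this
  linarith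

end TopLevel

theorem abs_apply_le_taHomNorm_rpow {N : ℕ} (x : List (Fin d) → ℝ) {w : List (Fin d)}
    (hw : w.length ≤ N) (hw0 : w ≠ []) :
    |x w| ≤ taHomNorm N x ^ (w.length : ℝ) := by
  set S : ℝ := ∑ f : Fin w.length → Fin d, |x (List.ofFn f)|
  have hS : 0 ≤ S := Finset.sum_nonneg fun _ _ => abs_nonneg _
  have hxS : |x w| ≤ S := by
    conv_lhs => rw [← List.ofFn_getElem (xs := w)]
    exact Finset.single_le_sum (f := fun f : Fin w.length → Fin d => |x (List.ofFn f)|)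
      (fun _ _ => abs_nonneg _) (Finset.mem_univ _)
  have hSnorm : S ^ (w.length : ℝ)⁻¹ ≤ taHomNorm N x :=
    Finset.single_le_sum
      (f := fun k => (∑ f : Fin k → Fin d, |x (List.ofFn f)|) ^ (k : ℝ)⁻¹)
      (fun _ _ => Real.rpow_nonneg (Finset.sum_nonneg fun _ _ => abs_nonneg _) _)
      (Finset.mem_Icc.mpr ⟨List.length_pos_iff.mpr hw0, hw⟩)
  have hlen : (w.length : ℝ) ≠ 0 := by simpa using hw0
  calc |x w| ≤ S := hxS
    _ = (S ^ (w.length : ℝ)⁻¹) ^ (w.length : ℝ) := by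
      rw [← Real.rpow_mul hS, inv_mul_cancel₀ hlen, Real.rpow_one]
    _ ≤ taHomNorm N x ^ (w.length : ℝ) := by gcongr

theorem taHomNorm_nonneg (N : ℕ) (x : List (Fin d) → ℝ) : 0 ≤ taHomNorm N x :=
  Finset.sum_nonneg fun _ _ => Real.rpow_nonneg (Finset.sum_nonneg fun _ _ => abs_nonneg _) _

theorem abs_sub_sub_rpow_le_taHomNorm {m N : ℕ} {p : ℝ} {x x' y y' : List (Fin d) → ℝ}
    {w : List (Fin d)} (hx : x [] = 1) (hx' : x' [] = 1) (hy : y [] = 1) (hy' : y' [] = 1)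
    (hxx : AgreeUpTo m x x') (hyy : AgreeUpTo m y y') (hw : w.length = m + 1)
    (hN : m + 1 ≤ N) (hp : 0 ≤ p) (hpm : p ≤ m + 1) :
    |(y w - y' w) - (x w - x' w)| ^ (p / (m + 1)) ≤
      taHomNorm N (taMul N (taInv N x) y) ^ p + taHomNorm N (taMul N (taInv N x') y') ^ p := by
  set a := taHomNorm N (taMul N (taInv N x) y)
  set a' := taHomNorm N (taMul N (taInv N x') y')
  have hw0 : w ≠ [] := List.ne_nil_of_length_eq_add_one hw
  have hlen : (w.length : ℝ) = m + 1 := by rw [hw]; push_cast; ring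
  have hq : 0 ≤ p / (m + 1) := by positivity
  have hbound : |(y w - y' w) - (x w - x' w)| ≤ a ^ ((m : ℝ) + 1) + a' ^ ((m : ℝ) + 1) := by
    rw [sub_sub_sub_comm, ← taMul_taInv_sub_taMul_taInv_of_length_eq hx hx' hy hy' hxx hyy hw hN,
      ← hlen]
    exact (abs_sub _ _).trans (add_le_add (abs_apply_le_taHomNorm_rpow _ (hw.trans_le hN) hw0)
      (abs_apply_le_taHomNorm_rpow _ (hw.trans_le hN) hw0))
  have hpow (b : ℝ) (hb : 0 ≤ b) : (b ^ ((m : ℝ) + 1)) ^ (p / (m + 1)) = b ^ p := by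
    rw [← Real.rpow_mul hb, mul_div_cancel₀ _ (by positivity)]
  calc |(y w - y' w) - (x w - x' w)| ^ (p / (m + 1))
        ≤ (a ^ ((m : ℝ) + 1) + a' ^ ((m : ℝ) + 1)) ^ (p / (m + 1)) := by gcongr
    _ ≤ (a ^ ((m : ℝ) + 1)) ^ (p / (m + 1)) + (a' ^ ((m : ℝ) + 1)) ^ (p / (m + 1)) :=
      Real.rpow_add_le_add_rpow (Real.rpow_nonneg (taHomNorm_nonneg _ _) _)
        (Real.rpow_nonneg (taHomNorm_nonneg _ _) _) hq
        (div_le_one_of_le₀ hpm (by positivity))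
    _ = a ^ p + a' ^ p := by
      rw [hpow a (taHomNorm_nonneg _ _), hpow a' (taHomNorm_nonneg _ _)]

theorem taLeftLim_nil {Z : ℝ → List (Fin d) → ℝ} (hZ : ∀ s, Z s [] = 1) (t : ℝ) :
    taLeftLim Z t [] = 1 := by
  simp only [taLeftLim, hZ]
  exact leftLim_eq_of_tendsto tendsto_const_nhds

theorem AgreeUpTo.leftLim {m : ℕ} {Z Y : ℝ → List (Fin d) → ℝ}
    (h : ∀ s, AgreeUpTo m (Z s) (Y s)) (t : ℝ) : AgreeUpTo m (taLeftLim Z t) (taLeftLim Y t) :=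
  fun u hu => by simp only [taLeftLim, h _ u hu]

theorem continuousWithinAt_Iio_sub_of_taMul_taInv_eq {m N : ℕ}
    {Z Y : ℝ → List (Fin d) → ℝ} {s LZ LY : ℝ} {w : List (Fin d)}
    (hZ : ∀ t, Z t [] = 1) (hY : ∀ t, Y t [] = 1) (hZY : ∀ t, AgreeUpTo m (Z t) (Y t))
    (hjump : taMul N (taInv N (taLeftLim Z s)) (Z s) = taMul N (taInv N (taLeftLim Y s)) (Y s))
    (hw : w.length = m + 1) (hN : m + 1 ≤ N)
    (hLZ : Filter.Tendsto (fun t => Z t w) (nhdsWithin s (Set.Iio s)) (nhds LZ))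
    (hLY : Filter.Tendsto (fun t => Y t w) (nhdsWithin s (Set.Iio s)) (nhds LY)) :
    ContinuousWithinAt (fun t => Z t w - Y t w) (Set.Iio s) s := by
  have hjw := sub_eq_sub_of_taMul_taInv_eq (taLeftLim_nil hZ s) (taLeftLim_nil hY s) (hZ s) (hY s)
    (AgreeUpTo.leftLim hZY s) (hZY s) hjump hw hN
  simp only [taLeftLim, leftLim_eq_of_tendsto hLZ, leftLim_eq_of_tendsto hLY] at hjw
  rw [ContinuousWithinAt, show Z s w - Y s w = LZ - LY by linarith]
  exact hLZ.sub hLY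

end

theorem minimal_jump_extension_unique_general
    {d m : ℕ} (T p : ℝ)
    (hp1 : (m : ℝ) ≤ p) (hp2 : p < (m : ℝ) + 1)
    (Z Y : ℝ → List (Fin d) → ℝ)
    (hZ1 : ∀ t : ℝ, Z t [] = 1) (hY1 : ∀ t : ℝ, Y t [] = 1)
    (hZ0 : Z 0 = taOne) (hY0 : Y 0 = taOne)
    (hZc : ∀ w : List (Fin d), Cadlag (fun t => Z t w) 0 T)
    (hYc : ∀ w : List (Fin d), Cadlag (fun t => Y t w) 0 T)
    (hZv : ∃ M : ℝ, ∀ P : Finset ℝ, IsPartition 0 T P →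
      ∑ x ∈ P.erase T,
        taHomNorm (m + 1) (taMul (m + 1) (taInv (m + 1) (Z x)) (Z (nextPt P T x))) ^ p ≤ M)
    (hYv : ∃ M : ℝ, ∀ P : Finset ℝ, IsPartition 0 T P →
      ∑ x ∈ P.erase T,
        taHomNorm (m + 1) (taMul (m + 1) (taInv (m + 1) (Y x)) (Y (nextPt P T x))) ^ p ≤ M)
    (hproj : ∀ t : ℝ, ∀ w : List (Fin d), w.length ≤ m → Z t w = Y t w)
    (hjump : ∀ t : ℝ, 0 < t → t ≤ T →
      taMul (m + 1) (taInv (m + 1) (taLeftLim Z t)) (Z t) =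
      taMul (m + 1) (taInv (m + 1) (taLeftLim Y t)) (Y t)) :
    ∀ t ∈ Set.Icc (0:ℝ) T, ∀ w : List (Fin d), w.length ≤ m + 1 → Z t w = Y t w := by
  intro t ht w hw
  rcases hw.lt_or_eq with hw | hw
  · exact hproj t w (Nat.lt_succ_iff.mp hw)
  set D : ℝ → ℝ := fun s => Z s w - Y s w
  have hD : ContinuousOn D (Set.Icc 0 T) :=
    continuousOn_Icc_of_continuousWithinAt_Ici_Iio
      (fun s hs => ((hZc w).1 s hs).sub ((hYc w).1 s hs)) fun s hs => by
        obtain ⟨LZ, hLZ⟩ := (hZc w).2 s hs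
        obtain ⟨LY, hLY⟩ := (hYc w).2 s hs
        exact continuousWithinAt_Iio_sub_of_taMul_taInv_eq hZ1 hY1 hproj (hjump s hs.1 hs.2) hw
          le_rfl hLZ hLY
  obtain ⟨MZ, hMZ⟩ := hZv
  obtain ⟨MY, hMY⟩ := hYv
  have hp : 0 ≤ p := (Nat.cast_nonneg m).trans hp1
  have hvar (K : ℕ) (u : ℕ → ℝ) (hu : StrictMonoOn u (Set.Iic K)) (hu0 : u 0 = 0)
      (huK : u K = t) :
      ∑ i ∈ Finset.range K, |D (u (i + 1)) - D (u i)| ^ (p / (m + 1)) ≤ MZ + MY := by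
    have hZsum := sum_le_of_forall_isPartition
      (F := fun s s' => taHomNorm (m + 1) (taMul (m + 1) (taInv (m + 1) (Z s)) (Z s')) ^ p)
      (fun _ _ => Real.rpow_nonneg (taHomNorm_nonneg _ _) _) hMZ hu hu0 (huK ▸ ht.2)
    have hYsum := sum_le_of_forall_isPartition
      (F := fun s s' => taHomNorm (m + 1) (taMul (m + 1) (taInv (m + 1) (Y s)) (Y s')) ^ p)
      (fun _ _ => Real.rpow_nonneg (taHomNorm_nonneg _ _) _) hMY hu hu0 (huK ▸ ht.2)
    refine (Finset.sum_le_sum fun i _ => abs_sub_sub_rpow_le_taHomNorm (hZ1 _) (hY1 _)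
      (hZ1 _) (hY1 _) (hproj _) (hproj _) hw le_rfl hp hp2.le).trans ?_
    rw [Finset.sum_add_distrib]
    exact add_le_add hZsum hYsum
  have hDt := eq_of_continuousOn_of_sum_rpow_le ht.1 (hD.mono (Set.Icc_subset_Icc_right ht.2))
    ((div_lt_one (by positivity)).mpr hp2) hvar
  simpa [D, hZ0, hY0, sub_eq_zero, eq_comm] using hDt

/-- Let `n = m+1` and let `𝐙, 𝐘 : [0,T] → T₁^{(n)}(ℝ^d)` be càdlàg paths of
finite `p`-variation w.r.t. the homogeneous norm `‖1+g‖ = ∑_k |g^k|^{1/k}`, starting at `1`,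
projecting to the same path in `T^{(m)}`, and with identical jumps `Δ_t 𝐙 = Δ_t 𝐘`.
Then `𝐙 = 𝐘`. -/
theorem minimal_jump_extension_unique
    {d m : ℕ} (hm : 1 ≤ m) (T p : ℝ) (hT : 0 < T)
    (hp1 : (m : ℝ) ≤ p) (hp2 : p < (m : ℝ) + 1)
    (Z Y : ℝ → List (Fin d) → ℝ)
    (hZ1 : ∀ t : ℝ, Z t [] = 1) (hY1 : ∀ t : ℝ, Y t [] = 1)
    (hZ0 : Z 0 = taOne) (hY0 : Y 0 = taOne)
    (hZc : ∀ w : List (Fin d), Cadlag (fun t => Z t w) 0 T)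
    (hYc : ∀ w : List (Fin d), Cadlag (fun t => Y t w) 0 T)
    (hZv : ∃ M : ℝ, ∀ P : Finset ℝ, IsPartition 0 T P →
      ∑ x ∈ P.erase T,
        taHomNorm (m + 1) (taMul (m + 1) (taInv (m + 1) (Z x)) (Z (nextPt P T x))) ^ p ≤ M)
    (hYv : ∃ M : ℝ, ∀ P : Finset ℝ, IsPartition 0 T P →
      ∑ x ∈ P.erase T,
        taHomNorm (m + 1) (taMul (m + 1) (taInv (m + 1) (Y x)) (Y (nextPt P T x))) ^ p ≤ M)
    (hproj : ∀ t : ℝ, ∀ w : List (Fin d), w.length ≤ m → Z t w = Y t w)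
    (hjump : ∀ t : ℝ, 0 < t → t ≤ T →
      taMul (m + 1) (taInv (m + 1) (taLeftLim Z t)) (Z t) =
      taMul (m + 1) (taInv (m + 1) (taLeftLim Y t)) (Y t)) :
    ∀ t ∈ Set.Icc (0:ℝ) T, ∀ w : List (Fin d), w.length ≤ m + 1 → Z t w = Y t w :=
  minimal_jump_extension_unique_general T p hp1 hp2 Z Y hZ1 hY1 hZ0 hY0 hZc hYc hZv hYv hproj hjump
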